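/- arXiv:math/0403256 — 4 statements merged into one kernel-verified Lean document; each statement's English description precedes it below -/
import Mathlib

section
/- Let m, n be coprime positive integers, h = m + n, δ_i the unique integer with i·h ≤ δ_i·n < i·h + n, and f(i) = δ_{i−1}·n − (i−1)·h for 1 ≤ i ≤ n. Then the inverse of f is given by f'(x) ≡ 1 − x·h* (mod n), where h* is an inverse of h modulo n; i.e. for each x in {0,…,n−1}, the unique i in {1,…,n} with i·h ≡ h − x (mod n) satisfies f(i) = x. -/
theorem stmt_3 (m n : ℕ) (hm : 0 < m) (hn : 0 < n) (hcop : Nat.Coprime m n)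
    (δ : ℕ → ℤ)
    (hδ : ∀ i : ℕ, (i : ℤ) * (m + n) ≤ δ i * n ∧ δ i * n < (i : ℤ) * (m + n) + n)
    (f : ℕ → ℤ) (hf : ∀ i : ℕ, 1 ≤ i → f i = δ (i - 1) * n - ((i : ℤ) - 1) * (m + n)) :
    ∀ x : ℤ, 0 ≤ x → x ≤ (n : ℤ) - 1 →
      ∀ i : ℕ, 1 ≤ i → i ≤ n →
        (i : ℤ) * (m + n) ≡ ((m : ℤ) + n) - x [ZMOD n] → f i = x := by
  intro x hx0 hx1 i hi1 hin hcong
  have hcast : ((i - 1 : ℕ) : ℤ) = (i : ℤ) - 1 := by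
    have : (1 : ℕ) ≤ i := hi1
    push_cast [this]; ring
  obtain ⟨hlo, hhi⟩ := hδ (i - 1)
  rw [hcast] at hlo hhi
  have hfi := hf i hi1
  have h0 : 0 ≤ f i := by rw [hfi]; linarith
  have h1 : f i < n := by rw [hfi]; linarith
  -- congruence: f i ≡ x mod n
  have hmod : (n : ℤ) ∣ (f i - x) := by
    have h3 : (n : ℤ) ∣ (((m : ℤ) + n - x) - (i : ℤ) * (m + n)) := hcong.dvd
    have : f i - x = (((m : ℤ) + n - x) - (i : ℤ) * (m + n)) + δ (i - 1) * n := by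
      rw [hfi]; ring
    rw [this]
    exact dvd_add h3 ⟨δ (i - 1), by ring⟩
  have habs : |f i - x| < n := by
    rw [abs_lt]; constructor <;> linarith
  have := Int.eq_zero_of_abs_lt_dvd hmod habs
  linarith
end

section
/- Let d, e be positive integers with e ≥ d, g = d + e, and let δ_i be the unique integer with i·g ≤ δ_i·d < i·g + d. Suppose m, n are positive integers with h := m + n satisfying g·m > d·h (equivalently g/d > h/m). Then for all integers i > j ≥ 1 one has δ_i − δ_j + 1 > (i−j)·(h/m), and consequently (δ_i − δ_j)·m + j·h + m > i·h. -/
/-!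
Since `δ_i` is the ceiling of `i g / d`, the difference `δ_i - δ_j + 1` exceeds `(i - j) g / d`,
and `g / d > h / m` with `i - j > 0` gives the first inequality; multiplying it by `m` gives the
second.
-/

section CeilingBounds

variable {K : Type*} [Field K] [LinearOrder K] [IsStrictOrderedRing K]

theorem sub_mul_div_lt_sub_add_one {d g a b x y : K} (hd : 0 < d)
    (hx : a * g ≤ x * d) (hy : y * d < b * g + d) :
    (a - b) * (g / d) < x - y + 1 := by
  rw [← mul_div_assoc, div_lt_iff₀ hd]
  linarith

theorem sub_mul_lt_sub_add_one {d g a b x y s : K} (hd : 0 < d) (hab : b < a)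
    (hs : s < g / d) (hx : a * g ≤ x * d) (hy : y * d < b * g + d) :
    (a - b) * s < x - y + 1 :=
  (mul_lt_mul_of_pos_left hs (sub_pos.mpr hab)).trans (sub_mul_div_lt_sub_add_one hd hx hy)

end CeilingBounds

theorem stmt_7_general (d e : ℕ) (hd : 0 < d) (δ : ℕ → ℤ)
    (hδ : ∀ i : ℕ, (i : ℤ) * (d + e) ≤ δ i * d ∧ δ i * d < (i : ℤ) * (d + e) + d)
    (m n : ℕ) (hm : 0 < m)
    (hslope : (d + e) * m > d * (m + n)) :
    ∀ i j : ℕ, 1 ≤ j → j < i →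
      ((δ i : ℚ) - δ j + 1 > ((i : ℚ) - j) * ((m + n : ℚ) / m)) ∧
      (δ i - δ j) * (m : ℤ) + (j : ℤ) * (m + n) + m > (i : ℤ) * (m + n) := by
  intro i j _ hji
  have hmq : (0 : ℚ) < m := by exact_mod_cast hm
  have hslope' : (m + n : ℚ) / m < (d + e) / d := by
    rw [div_lt_div_iff₀ hmq (by exact_mod_cast hd)]
    rw [mul_comm _ (d : ℚ)]
    exact_mod_cast hslope
  have hδq : ∀ k : ℕ, (k : ℚ) * (d + e) ≤ δ k * d ∧ (δ k : ℚ) * d < k * (d + e) + d := fun k ↦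
    ⟨by exact_mod_cast (hδ k).1, by exact_mod_cast (hδ k).2⟩
  have hfirst : ((i : ℚ) - j) * ((m + n) / m) < δ i - δ j + 1 :=
    sub_mul_lt_sub_add_one (by exact_mod_cast hd) (by exact_mod_cast hji) hslope'
      (hδq i).1 (hδq j).2
  refine ⟨hfirst, ?_⟩
  rw [← mul_div_assoc, div_lt_iff₀ hmq] at hfirst
  have hsecond : ((i : ℤ) - j) * (m + n) < (δ i - δ j + 1) * m := by exact_mod_cast hfirst
  linarith

theorem stmt_7 (d e : ℕ) (hd : 0 < d) (he : 0 < e) (hde : d ≤ e)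
    (hcop : Nat.Coprime d e) (δ : ℕ → ℤ)
    (hδ : ∀ i : ℕ, (i : ℤ) * (d + e) ≤ δ i * d ∧ δ i * d < (i : ℤ) * (d + e) + d)
    (m n : ℕ) (hm : 0 < m) (hn : 0 < n)
    (hslope : (d + e) * m > d * (m + n)) :
    ∀ i j : ℕ, 1 ≤ j → j < i →
      ((δ i : ℚ) - δ j + 1 > ((i : ℚ) - j) * ((m + n : ℚ) / m)) ∧
      (δ i - δ j) * (m : ℤ) + (j : ℤ) * (m + n) + m > (i : ℤ) * (m + n) :=
  stmt_7_general d e hd δ hδ m n hm hslope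
end

section
/- Let m, n be positive coprime integers, h = m + n, and let x, y be integers with x·m + y·n = 1. In the quotient ring L = ℚ_p[F,V]/(F·V − p, F^m − V^n) (where F and V commute), the element π := F^y·V^x satisfies π^h = p, π^n = F, and π^m = V. -/
open MvPolynomial in
theorem stmt_13 (p : ℕ) [Fact p.Prime] (m n : ℕ) (hm : 0 < m) (hn : 0 < n)
    (hcop : Nat.Coprime m n) (x y : ℤ) (hxy : x * m + y * n = 1)
    (L : Type*) [CommRing L] [Algebra ℚ_[p] L]
    (F V : L) (hFV : F * V = (p : L)) (hFmVn : F ^ m = V ^ n)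
    (hpres : ∀ z : L, z ∈ Algebra.adjoin ℚ_[p] ({F, V} : Set L))
    (uF uV : Lˣ) (huF : (uF : L) = F) (huV : (uV : L) = V) :
    (((uF ^ y * uV ^ x : Lˣ) : L)) ^ (m + n) = (p : L) ∧
    (((uF ^ y * uV ^ x : Lˣ) : L)) ^ n = F ∧
    (((uF ^ y * uV ^ x : Lˣ) : L)) ^ m = V := by
  have h1 : uF ^ (m : ℤ) = uV ^ (n : ℤ) := by
    rw [zpow_natCast, zpow_natCast]
    exact Units.ext (by simpa [huF, huV] using hFmVn)
  set π : Lˣ := uF ^ y * uV ^ x with hπ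
  have hπn : π ^ (n : ℤ) = uF := by
    calc π ^ (n : ℤ) = uF ^ (y * n) * uV ^ (x * n) := by
          rw [hπ, mul_zpow, ← zpow_mul, ← zpow_mul]
      _ = uF ^ (y * n) * uF ^ (m * x) := by
          rw [mul_comm x (n : ℤ), zpow_mul uV, ← h1, ← zpow_mul]
      _ = uF ^ (y * n + m * x) := (zpow_add uF _ _).symm
      _ = uF ^ (1 : ℤ) := by rw [show y * n + m * x = 1 by linarith]
      _ = uF := zpow_one uF
  have hπm : π ^ (m : ℤ) = uV := by
    calc π ^ (m : ℤ) = uF ^ (y * m) * uV ^ (x * m) := by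
          rw [hπ, mul_zpow, ← zpow_mul, ← zpow_mul]
      _ = uV ^ (n * y) * uV ^ (x * m) := by
          rw [mul_comm y (m : ℤ), zpow_mul uF, h1, ← zpow_mul]
      _ = uV ^ (n * y + x * m) := (zpow_add uV _ _).symm
      _ = uV ^ (1 : ℤ) := by rw [show n * y + x * m = 1 by linarith]
      _ = uV := zpow_one uV
  have hn' : π ^ n = uF := by rw [← zpow_natCast π n, hπn]
  have hm' : π ^ m = uV := by rw [← zpow_natCast π m, hπm]
  refine ⟨?_, ?_, ?_⟩
  · have : π ^ (m + n) = uV * uF := by rw [pow_add, hm', hn']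
    calc ((π : L)) ^ (m + n) = ((π ^ (m + n) : Lˣ) : L) := by
          rw [Units.val_pow_eq_pow_val]
      _ = (uV : L) * (uF : L) := by rw [this]; rfl
      _ = (p : L) := by rw [huF, huV, mul_comm, hFV]
  · calc ((π : L)) ^ n = ((π ^ n : Lˣ) : L) := by rw [Units.val_pow_eq_pow_val]
      _ = F := by rw [hn', huF]
  · calc ((π : L)) ^ m = ((π ^ m : Lˣ) : L) := by rw [Units.val_pow_eq_pow_val]
      _ = V := by rw [hm', huV]
end

section
/- Let m, n, d, e be positive integers with n/(m+n) < e/(d+e), h = m+n, g = d+e. Let δ_i be the unique integer with i·g ≤ δ_i·d < i·g + d (for e ≥ d). Then for 1 ≤ j < i ≤ d, the inequality δ_j·d < (j+1)·d + j·e together with δ_i·d ≥ i·g implies (δ_i − δ_j)·m + j·(m+n) + m > i·h. -/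
set_option maxHeartbeats 1600000


theorem stmt_15 (m n d e : ℕ) (hm : 0 < m) (hn : 0 < n) (hd : 0 < d) (he : 0 < e)
    (hcop1 : Nat.Coprime m n) (hcop2 : Nat.Coprime d e) (hde : d ≤ e)
    (hslope : (n : ℚ) / (m + n) < (e : ℚ) / (d + e)) (δ : ℕ → ℤ)
    (hδ : ∀ i : ℕ, (i : ℤ) * (d + e) ≤ δ i * d ∧ δ i * d < (i : ℤ) * (d + e) + d) :
    ∀ i j : ℕ, 1 ≤ j → j < i → i ≤ d →
      δ j * d < ((j : ℤ) + 1) * d + (j : ℤ) * e →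
      δ i * d ≥ (i : ℤ) * (d + e) →
      (δ i - δ j) * m + (j : ℤ) * (m + n) + m > (i : ℤ) * (m + n) := by
  intro i j hj hji hid hδj hδi
  have hnd : (n : ℤ) * d < e * m := by
    rw [div_lt_div_iff₀ (by positivity) (by positivity)] at hslope
    have : (n : ℚ) * d < e * m := by push_cast at hslope ⊢; nlinarith
    exact_mod_cast this
  have hji' : (j : ℤ) < i := by exact_mod_cast hji
  have hmpos : (0:ℤ) < m := by exact_mod_cast hm
  have hnpos : (0:ℤ) < n := by exact_mod_cast hn
  have hdpos : (0:ℤ) < d := by exact_mod_cast hd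
  have hepos : (0:ℤ) < e := by exact_mod_cast he
  have hjpos : (1:ℤ) ≤ j := by exact_mod_cast hj
  -- k = δ i - δ j + 1, K = i - j
  have hk : (δ i - δ j + 1) * d > ((i : ℤ) - j) * (d + e) := by nlinarith
  have hgm : ((d:ℤ) + e) * m > d * (m + n) := by nlinarith
  have hKpos : (0:ℤ) ≤ ((i:ℤ) - j) * (d + e) := by nlinarith
  have key := mul_lt_mul'' hk hgm hKpos (by positivity)
  nlinarith [key, mul_pos (add_pos hdpos hepos) hdpos]
end
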